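/- If s ∈ SL(2,ℝ) is not of the form g H g⁻¹ H for any g ∈ SL(2,ℝ), then the image of the linear map P_s : sl(2,ℝ) → sl(2,ℝ), P_s(u) = ½( σ(s)⁻¹ σ(u) σ(s) − s σ(u) s⁻¹ ), equals { x − s H x H s⁻¹ : x ∈ sl(2,ℝ) }, the tangent space at s to the orbit of s under the twisted action (g,s) ↦ g s σ(g)⁻¹. (Hence away from the orbit of the identity, the symplectic leaves of the Poisson structure P_S^σ are the orbits of the twisted action.) -/

import Mathlib

/-- H = [[1,0],[0,−1]]. -/
noncomputable def Hmat : Matrix (Fin 2) (Fin 2) ℝ := !![1, 0; 0, -1]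

/-- The bivector P_S^σ(s): P_s(u) = ½(σ(s)⁻¹ σ(u) σ(s) − s σ(u) s⁻¹),
with σ(m) = H m H. -/
noncomputable def Pbiv (s u : Matrix (Fin 2) (Fin 2) ℝ) : Matrix (Fin 2) (Fin 2) ℝ :=
  (2:ℝ)⁻¹ • ((Hmat * s * Hmat)⁻¹ * (Hmat * u * Hmat) * (Hmat * s * Hmat)
    - s * (Hmat * u * Hmat) * s⁻¹)

/-!
Write `M y = s σ(y) s⁻¹`, whose inverse is `N y = σ(s)⁻¹ σ(y) σ(s)`. Then `P_s = ½ (N - M)`,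
the tangent space is the image of `1 - M` on `sl(2)`, and `N - M = (1 - M) N (1 + M)`.
Hence `Im P_s ⊆ Im (1 - M)` always, with equality as soon as `1 + M` is invertible.
A nonzero kernel vector of `1 + M` is traceless and, for `s = [[p, q], [r, t]]`, forces
`p = t`. Conversely, when `p = t` we have `σ(s) = s⁻¹`, so `g = 1 + s` (or `(1 - s) J` when
`tr s = -2`) solves `s σ(g) = g`, and rescaling `g` by a diagonal matrix gives `s = g σ(g)⁻¹`
with `det g = 1`.
-/

open Matrix

namespace Matrix

variable {n K : Type*} [Fintype n] [DecidableEq n] [CommRing K] {h s : Matrix n n K}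

noncomputable def twistedConj (h s : Matrix n n K) : Matrix n n K →ₗ[K] Matrix n n K where
  toFun y := s * (h * y * h) * s⁻¹
  map_add' y z := by simp only [mul_add, add_mul]
  map_smul' c y := by simp only [Matrix.mul_smul, Matrix.smul_mul, RingHom.id_apply]

noncomputable def twistedConjInv (h s : Matrix n n K) : Matrix n n K →ₗ[K] Matrix n n K where
  toFun y := (h * s * h)⁻¹ * (h * y * h) * (h * s * h)
  map_add' y z := by simp only [mul_add, add_mul]
  map_smul' c y := by simp only [Matrix.mul_smul, Matrix.smul_mul, RingHom.id_apply]

theorem twistedConj_apply (y : Matrix n n K) :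
    twistedConj h s y = s * (h * y * h) * s⁻¹ := rfl

theorem twistedConjInv_apply (y : Matrix n n K) :
    twistedConjInv h s y = (h * s * h)⁻¹ * (h * y * h) * (h * s * h) := rfl

theorem inv_mul_mul_eq_mul_inv_mul (hh : h * h = 1) (hs : IsUnit s.det) :
    (h * s * h)⁻¹ = h * s⁻¹ * h :=
  inv_eq_left_inv <| by
    simp only [mul_assoc, ← mul_assoc h h, hh, one_mul, nonsing_inv_mul_cancel_left _ _ hs]

theorem twistedConj_twistedConjInv (hh : h * h = 1) (hs : IsUnit s.det) (y : Matrix n n K) :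
    twistedConj h s (twistedConjInv h s y) = y := by
  have hh' (B : Matrix n n K) : h * (h * B) = B := by rw [← mul_assoc, hh, one_mul]
  rw [twistedConj_apply, twistedConjInv_apply, inv_mul_mul_eq_mul_inv_mul hh hs]
  simp only [mul_assoc, hh', mul_nonsing_inv_cancel_left _ _ hs, mul_nonsing_inv _ hs, hh, mul_one]

theorem twistedConjInv_twistedConj (hh : h * h = 1) (hs : IsUnit s.det) (y : Matrix n n K) :
    twistedConjInv h s (twistedConj h s y) = y := by
  have hh' (B : Matrix n n K) : h * (h * B) = B := by rw [← mul_assoc, hh, one_mul]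
  rw [twistedConj_apply, twistedConjInv_apply, inv_mul_mul_eq_mul_inv_mul hh hs]
  simp only [mul_assoc, hh', nonsing_inv_mul_cancel_left _ _ hs, hh, mul_one]

theorem trace_twistedConj (hh : h * h = 1) (hs : IsUnit s.det) (y : Matrix n n K) :
    (twistedConj h s y).trace = y.trace := by
  rw [twistedConj_apply, trace_mul_cycle, nonsing_inv_mul _ hs, one_mul, trace_mul_cycle, hh,
    one_mul]

theorem trace_twistedConjInv (hh : h * h = 1) (hs : IsUnit s.det) (y : Matrix n n K) :
    (twistedConjInv h s y).trace = y.trace := by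
  rw [← trace_twistedConj hh hs, twistedConj_twistedConjInv hh hs]

theorem det_one_add_fin_two (s : Matrix (Fin 2) (Fin 2) K) :
    (1 + s).det = 1 + s.trace + s.det := by
  simp only [det_fin_two, trace_fin_two, Matrix.add_apply, one_apply_eq, one_apply_ne zero_ne_one,
    one_apply_ne one_ne_zero]
  ring

theorem det_one_sub_fin_two (s : Matrix (Fin 2) (Fin 2) K) :
    (1 - s).det = 1 - s.trace + s.det := by
  simp only [det_fin_two, trace_fin_two, Matrix.sub_apply, one_apply_eq, one_apply_ne zero_ne_one,
    one_apply_ne one_ne_zero]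
  ring

end Matrix

theorem Hmat_mul_Hmat : Hmat * Hmat = 1 := by
  simp [Hmat, one_fin_two]

theorem Hmat_mul_mul_Hmat (a b c d : ℝ) : Hmat * !![a, b; c, d] * Hmat = !![a, -b; -c, d] := by
  simp [Hmat]

theorem eq_zero_of_mul_add_mul_Hmat {s y : Matrix (Fin 2) (Fin 2) ℝ} (hst : s 0 0 ≠ s 1 1)
    (hy : y.trace = 0) (h : y * s + s * (Hmat * y * Hmat) = 0) : y = 0 := by
  obtain ⟨p, q, r, t, rfl⟩ : ∃ p q r t, s = !![p, q; r, t] := ⟨_, _, _, _, eta_fin_two s⟩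
  obtain ⟨a, b, c, d, rfl⟩ : ∃ a b c d, y = !![a, b; c, d] := ⟨_, _, _, _, eta_fin_two y⟩
  change p ≠ t at hst
  rw [trace_fin_two_of] at hy
  rw [Hmat_mul_mul_Hmat, mul_fin_two, mul_fin_two] at h
  have h00 : a * p + b * r + (p * a + q * -c) = 0 := congr_fun₂ h 0 0
  have h01 : a * q + b * t + (p * -b + q * d) = 0 := congr_fun₂ h 0 1
  have h10 : c * p + d * r + (r * a + t * -c) = 0 := congr_fun₂ h 1 0
  have h11 : c * q + d * t + (r * -b + t * d) = 0 := congr_fun₂ h 1 1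
  have hpt : p - t ≠ 0 := sub_ne_zero.2 hst
  have hb : b = 0 := (mul_eq_zero.1
    (by linear_combination -h01 + q * hy : b * (p - t) = 0)).resolve_right hpt
  have hc : c = 0 := (mul_eq_zero.1
    (by linear_combination h10 - r * hy : c * (p - t) = 0)).resolve_right hpt
  have ha : a = 0 := (mul_eq_zero.1
    (by linear_combination (h00 + h11) / 2 - t * hy : a * (p - t) = 0)).resolve_right hpt
  have hd : d = 0 := by linear_combination hy - ha
  rw [ha, hb, hc, hd]
  exact (eta_fin_two 0).symm

theorem exists_add_twistedConj_eq {s : Matrix (Fin 2) (Fin 2) ℝ} (hs : IsUnit s.det)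
    (hst : s 0 0 ≠ s 1 1) (x : Matrix (Fin 2) (Fin 2) ℝ) :
    ∃ z, z + twistedConj Hmat s z = x := by
  let f : Module.End ℝ (Matrix (Fin 2) (Fin 2) ℝ) := LinearMap.id + twistedConj Hmat s
  have hf : Function.Injective f := by
    refine (injective_iff_map_eq_zero f).2 fun y (hy : y + twistedConj Hmat s y = 0) => ?_
    refine eq_zero_of_mul_add_mul_Hmat hst ?_ ?_
    · have htr := congrArg trace hy
      rw [trace_add, trace_twistedConj Hmat_mul_Hmat hs, trace_zero] at htr
      linarith
    · rw [← zero_mul s, ← hy, add_mul, twistedConj_apply, nonsing_inv_mul_cancel_right _ _ hs]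
  exact LinearMap.injective_iff_surjective.1 hf x

theorem mul_Hmat_mul_self {s : Matrix (Fin 2) (Fin 2) ℝ} (hs : s.det = 1) (hst : s 0 0 = s 1 1) :
    s * Hmat * s = Hmat := by
  obtain ⟨p, q, r, t, rfl⟩ : ∃ p q r t, s = !![p, q; r, t] := ⟨_, _, _, _, eta_fin_two s⟩
  change p = t at hst
  subst hst
  rw [det_fin_two_of] at hs
  rw [Hmat, mul_fin_two, mul_fin_two]
  exact congrArg of (vec2_eq (vec2_eq (by linear_combination hs) (by ring))
    (vec2_eq (by ring) (by linear_combination -hs)))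

theorem exists_det_eq_one_of_mul_Hmat_mul_eq {s g : Matrix (Fin 2) (Fin 2) ℝ} (hg : g.det ≠ 0)
    (h : s * Hmat * g = g * Hmat) : ∃ g', g'.det = 1 ∧ s = g' * Hmat * g'⁻¹ * Hmat := by
  set D : Matrix (Fin 2) (Fin 2) ℝ := !![1, 0; 0, g.det⁻¹]
  have hD : D * Hmat = Hmat * D := by simp [D, Hmat]
  have hdet : (g * D).det = 1 := by simp [D, det_fin_two_of, hg]
  have hgD : s * Hmat * (g * D) = g * D * Hmat := by
    rw [← mul_assoc, h, mul_assoc, ← hD, ← mul_assoc]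
  refine ⟨g * D, hdet, ?_⟩
  calc s = s * Hmat * (g * D) * (g * D)⁻¹ * Hmat := by
        rw [mul_nonsing_inv_cancel_right _ _ (by simp [hdet]), mul_assoc, Hmat_mul_Hmat, mul_one]
    _ = g * D * Hmat * (g * D)⁻¹ * Hmat := by rw [hgD]

theorem exists_det_eq_one_eq_mul_Hmat_mul_inv_mul_Hmat {s : Matrix (Fin 2) (Fin 2) ℝ}
    (hs : s.det = 1) (hst : s 0 0 = s 1 1) : ∃ g, g.det = 1 ∧ s = g * Hmat * g⁻¹ * Hmat := by
  have hsHs := mul_Hmat_mul_self hs hst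
  have htr : s.trace = 2 * s 0 0 := by rw [trace_fin_two, ← hst]; ring
  by_cases hp : s 0 0 = -1
  · set J : Matrix (Fin 2) (Fin 2) ℝ := !![0, 1; -1, 0]
    have hJ : J * Hmat = -(Hmat * J) := by simp [J, Hmat]
    refine exists_det_eq_one_of_mul_Hmat_mul_eq (g := (1 - s) * J) ?_ ?_
    · rw [det_mul, det_one_sub_fin_two, htr, hs, hp, det_fin_two_of]
      norm_num
    · calc s * Hmat * ((1 - s) * J) = (s * Hmat - s * Hmat * s) * J := by noncomm_ring
        _ = (1 - s) * J * Hmat := by rw [hsHs, mul_assoc, hJ]; noncomm_ring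
  · refine exists_det_eq_one_of_mul_Hmat_mul_eq (g := 1 + s) ?_ ?_
    · rw [det_one_add_fin_two, htr, hs]
      exact fun h => hp (by linear_combination h / 2)
    · calc s * Hmat * (1 + s) = s * Hmat + s * Hmat * s := by noncomm_ring
        _ = (1 + s) * Hmat := by rw [hsHs]; noncomm_ring

theorem Pbiv_eq (s u : Matrix (Fin 2) (Fin 2) ℝ) :
    Pbiv s u = (2 : ℝ)⁻¹ • (twistedConjInv Hmat s u - twistedConj Hmat s u) := rfl

theorem stmt_13 (s : Matrix (Fin 2) (Fin 2) ℝ) (hs : s.det = 1)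
    (hnot : ¬ ∃ g : Matrix (Fin 2) (Fin 2) ℝ, g.det = 1 ∧ s = g * Hmat * g⁻¹ * Hmat) :
    {v | ∃ u : Matrix (Fin 2) (Fin 2) ℝ, u.trace = 0 ∧ Pbiv s u = v}
      = {v | ∃ x : Matrix (Fin 2) (Fin 2) ℝ, x.trace = 0 ∧
          v = x - s * (Hmat * x * Hmat) * s⁻¹} := by
  have hsu : IsUnit s.det := hs ▸ isUnit_one
  have hst : s 0 0 ≠ s 1 1 := fun h => hnot (exists_det_eq_one_eq_mul_Hmat_mul_inv_mul_Hmat hs h)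
  ext v
  constructor
  · rintro ⟨u, hu, rfl⟩
    refine ⟨(2 : ℝ)⁻¹ • (u + twistedConjInv Hmat s u), ?_, ?_⟩
    · simp [trace_twistedConjInv Hmat_mul_Hmat hsu, hu]
    · rw [← twistedConj_apply, map_smul, map_add, twistedConj_twistedConjInv Hmat_mul_Hmat hsu,
        Pbiv_eq]
      module
  · rintro ⟨x, hx, rfl⟩
    obtain ⟨z, rfl⟩ := exists_add_twistedConj_eq hsu hst x
    rw [trace_add, trace_twistedConj Hmat_mul_Hmat hsu] at hx
    refine ⟨(2 : ℝ) • twistedConj Hmat s z, ?_, ?_⟩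
    · rw [trace_smul, trace_twistedConj Hmat_mul_Hmat hsu, smul_eq_mul]
      linarith
    · rw [Pbiv_eq, ← twistedConj_apply, map_smul, twistedConjInv_twistedConj Hmat_mul_Hmat hsu,
        map_add, map_smul]
      module
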